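/- arXiv:1007.2519 — 5 statements merged into one kernel-verified Lean document; each statement's English description precedes it below -/
import Mathlib

section
/- If (x,y) is an equilibrium of F, then ζ := √(x² + y²) is a positive real root of the polynomial ζ⁶ − 2α·ζ⁵ + (α² + 2)·ζ⁴ − 2α·ζ³ + (1 + Ω²)·ζ² − I² = 0. -/
/-!
Writing `z = x + iy`, an equilibrium is a solution of `(g + iΩ) z = -I`, where `g` depends only on
`ρ = |z|`. Taking squared moduli gives `((ρ² - αρ + 1)² + Ω²) ρ² = I²`, which is the sextic expanded;
`ρ > 0` because `I ≠ 0`.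
-/

/-- `g(x,y) = −1 + α√(x²+y²) − (x²+y²)`. -/
noncomputable def gRIC (α x y : ℝ) : ℝ :=
  -1 + α * Real.sqrt (x ^ 2 + y ^ 2) - (x ^ 2 + y ^ 2)

/-- The planar vector field `F(x,y) = (g·x − Ω·y + I, g·y + Ω·x)`. -/
noncomputable def FRIC (α Ω I x y : ℝ) : ℝ × ℝ :=
  (gRIC α x y * x - Ω * y + I, gRIC α x y * y + Ω * x)

lemma gRIC_eq_sqrt (α x y : ℝ) :
    gRIC α x y = -1 + α * √(x ^ 2 + y ^ 2) - √(x ^ 2 + y ^ 2) ^ 2 := by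
  rw [gRIC, Real.sq_sqrt (by positivity)]

lemma gRIC_sq_add_sq_mul_eq_of_FRIC_eq_zero {α Ω I x y : ℝ} (h : FRIC α Ω I x y = (0, 0)) :
    (gRIC α x y ^ 2 + Ω ^ 2) * (x ^ 2 + y ^ 2) = I ^ 2 := by
  rw [FRIC, Prod.mk.injEq] at h
  rw [sq_add_sq_mul_sq_add_sq]
  linear_combination (gRIC α x y * x - Ω * y - I) * h.1 + (gRIC α x y * y + Ω * x) * h.2

theorem equilibrium_root_of_sextic_general
    (α Ω I : ℝ) (hI : 0 < I) (x y : ℝ)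
    (heq : FRIC α Ω I x y = (0, 0)) :
    0 < Real.sqrt (x ^ 2 + y ^ 2) ∧
    (Real.sqrt (x ^ 2 + y ^ 2)) ^ 6 - 2 * α * (Real.sqrt (x ^ 2 + y ^ 2)) ^ 5
      + (α ^ 2 + 2) * (Real.sqrt (x ^ 2 + y ^ 2)) ^ 4
      - 2 * α * (Real.sqrt (x ^ 2 + y ^ 2)) ^ 3
      + (1 + Ω ^ 2) * (Real.sqrt (x ^ 2 + y ^ 2)) ^ 2 - I ^ 2 = 0 := by
  have hmod := gRIC_sq_add_sq_mul_eq_of_FRIC_eq_zero heq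
  rw [gRIC_eq_sqrt] at hmod
  set ρ := √(x ^ 2 + y ^ 2)
  have hρsq : ρ ^ 2 = x ^ 2 + y ^ 2 := Real.sq_sqrt (by positivity)
  rw [← hρsq] at hmod
  have hρ : ρ ≠ 0 := by
    rintro hρ
    rw [hρ] at hmod
    nlinarith
  exact ⟨(Real.sqrt_nonneg _).lt_of_ne' hρ, by linear_combination hmod⟩

theorem equilibrium_root_of_sextic
    (α Ω I : ℝ) (hΩ : 0 < Ω) (hI : 0 < I) (x y : ℝ)
    (heq : FRIC α Ω I x y = (0, 0)) :
    0 < Real.sqrt (x ^ 2 + y ^ 2) ∧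
    (Real.sqrt (x ^ 2 + y ^ 2)) ^ 6 - 2 * α * (Real.sqrt (x ^ 2 + y ^ 2)) ^ 5
      + (α ^ 2 + 2) * (Real.sqrt (x ^ 2 + y ^ 2)) ^ 4
      - 2 * α * (Real.sqrt (x ^ 2 + y ^ 2)) ^ 3
      + (1 + Ω ^ 2) * (Real.sqrt (x ^ 2 + y ^ 2)) ^ 2 - I ^ 2 = 0 :=
  equilibrium_root_of_sextic_general α Ω I hI x y heq
end

section
/- A point (x,y) ∈ ℝ² is an equilibrium of F if and only if there exists ζ > 0 such that ζ⁶ − 2α·ζ⁵ + (α² + 2)·ζ⁴ − 2α·ζ³ + (1 + Ω²)·ζ² − I² = 0, x = −(−1 + α·ζ − ζ²)·ζ²/I, and y = Ω·ζ²/I; in that case ζ = √(x² + y²). -/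
open Real

lemma sextic_eq (α Ω I ζ : ℝ) :
    ζ ^ 6 - 2 * α * ζ ^ 5 + (α ^ 2 + 2) * ζ ^ 4 - 2 * α * ζ ^ 3 + (1 + Ω ^ 2) * ζ ^ 2 - I ^ 2 =
      ((-1 + α * ζ - ζ ^ 2) ^ 2 + Ω ^ 2) * ζ ^ 2 - I ^ 2 := by
  ring

lemma gRIC_eq_of_sq_add_sq_eq {α x y ζ : ℝ} (hζ : 0 ≤ ζ) (h : x ^ 2 + y ^ 2 = ζ ^ 2) :
    gRIC α x y = -1 + α * ζ - ζ ^ 2 := by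
  rw [gRIC, h, sqrt_sq hζ]

section LinearSystem

variable {g Ω I x y r : ℝ}

lemma sq_add_sq_mul_sq_add_sq_eq_sq (h₁ : g * x - Ω * y + I = 0) (h₂ : g * y + Ω * x = 0) :
    (g ^ 2 + Ω ^ 2) * (x ^ 2 + y ^ 2) = I ^ 2 := by
  linear_combination (g * x - Ω * y - I) * h₁ + (g * y + Ω * x) * h₂

lemma linear_system_iff_of_mul_eq_sq (hI : I ≠ 0) (hr : (g ^ 2 + Ω ^ 2) * r = I ^ 2) :
    (g * x - Ω * y + I = 0 ∧ g * y + Ω * x = 0) ↔ x = -g * r / I ∧ y = Ω * r / I := by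
  constructor
  · rintro ⟨h₁, h₂⟩
    have hx : (g ^ 2 + Ω ^ 2) * x = -g * I := by linear_combination g * h₁ + Ω * h₂
    have hy : (g ^ 2 + Ω ^ 2) * y = Ω * I := by linear_combination -Ω * h₁ + g * h₂
    rw [eq_div_iff hI, eq_div_iff hI]
    constructor <;> refine mul_right_cancel₀ hI ?_
    · linear_combination r * hx - x * hr
    · linear_combination r * hy - y * hr
  · rintro ⟨rfl, rfl⟩
    constructor <;> field_simp
    · linear_combination -hr
    · ring

lemma sq_add_sq_eq_of_eq_div (hI : I ≠ 0) (hr : (g ^ 2 + Ω ^ 2) * r = I ^ 2)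
    (hx : x = -g * r / I) (hy : y = Ω * r / I) : x ^ 2 + y ^ 2 = r := by
  subst hx hy
  field_simp
  linear_combination r * hr

end LinearSystem

theorem equilibrium_characterization_general
    (α Ω I : ℝ) (hI : 0 < I) (x y : ℝ) :
    (FRIC α Ω I x y = (0, 0) ↔
      ∃ ζ : ℝ, 0 < ζ ∧
        ζ ^ 6 - 2 * α * ζ ^ 5 + (α ^ 2 + 2) * ζ ^ 4 - 2 * α * ζ ^ 3
          + (1 + Ω ^ 2) * ζ ^ 2 - I ^ 2 = 0 ∧
        x = -(-1 + α * ζ - ζ ^ 2) * ζ ^ 2 / I ∧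
        y = Ω * ζ ^ 2 / I) ∧
    (∀ ζ : ℝ, 0 < ζ →
      ζ ^ 6 - 2 * α * ζ ^ 5 + (α ^ 2 + 2) * ζ ^ 4 - 2 * α * ζ ^ 3
        + (1 + Ω ^ 2) * ζ ^ 2 - I ^ 2 = 0 →
      x = -(-1 + α * ζ - ζ ^ 2) * ζ ^ 2 / I →
      y = Ω * ζ ^ 2 / I →
      ζ = Real.sqrt (x ^ 2 + y ^ 2)) := by
  simp only [sextic_eq, sub_eq_zero, FRIC, Prod.mk.injEq]
  refine ⟨⟨fun hF => ?_, fun ⟨ζ, hζ, hr, hxy⟩ => ?_⟩, fun ζ hζ hr hx hy => ?_⟩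
  · obtain ⟨ζ, hζ, hxy⟩ : ∃ ζ, 0 ≤ ζ ∧ x ^ 2 + y ^ 2 = ζ ^ 2 :=
      ⟨_, sqrt_nonneg _, (sq_sqrt (by positivity)).symm⟩
    rw [gRIC_eq_of_sq_add_sq_eq hζ hxy] at hF
    have hr := sq_add_sq_mul_sq_add_sq_eq_sq hF.1 hF.2
    rw [hxy] at hr
    have hζ₀ : ζ ≠ 0 := by rintro rfl; nlinarith
    exact ⟨ζ, hζ.lt_of_ne' hζ₀, hr, (linear_system_iff_of_mul_eq_sq hI.ne' hr).1 hF⟩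
  · rw [gRIC_eq_of_sq_add_sq_eq hζ.le (sq_add_sq_eq_of_eq_div hI.ne' hr hxy.1 hxy.2)]
    exact (linear_system_iff_of_mul_eq_sq hI.ne' hr).2 hxy
  · rw [sq_add_sq_eq_of_eq_div hI.ne' hr hx hy, sqrt_sq hζ.le]

theorem equilibrium_characterization
    (α Ω I : ℝ) (hΩ : 0 < Ω) (hI : 0 < I) (x y : ℝ) :
    (FRIC α Ω I x y = (0, 0) ↔
      ∃ ζ : ℝ, 0 < ζ ∧
        ζ ^ 6 - 2 * α * ζ ^ 5 + (α ^ 2 + 2) * ζ ^ 4 - 2 * α * ζ ^ 3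
          + (1 + Ω ^ 2) * ζ ^ 2 - I ^ 2 = 0 ∧
        x = -(-1 + α * ζ - ζ ^ 2) * ζ ^ 2 / I ∧
        y = Ω * ζ ^ 2 / I) ∧
    (∀ ζ : ℝ, 0 < ζ →
      ζ ^ 6 - 2 * α * ζ ^ 5 + (α ^ 2 + 2) * ζ ^ 4 - 2 * α * ζ ^ 3
        + (1 + Ω ^ 2) * ζ ^ 2 - I ^ 2 = 0 →
      x = -(-1 + α * ζ - ζ ^ 2) * ζ ^ 2 / I →
      y = Ω * ζ ^ 2 / I →
      ζ = Real.sqrt (x ^ 2 + y ^ 2)) :=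
  equilibrium_characterization_general α Ω I hI x y
end

section
/- Let (x,y) be an equilibrium of F and set ζ = √(x² + y²) (so ζ > 0). Then the determinant of the matrix J(x,y), namely (g + x²·h)·(g + y²·h) − (x·y·h − Ω)·(x·y·h + Ω), equals I²/ζ² + ζ·(−1 + α·ζ − ζ²)·(α − 2·ζ). -/
/-- `h(x,y) = α/√(x²+y²) − 2`. -/
noncomputable def hRIC (α x y : ℝ) : ℝ :=
  α / Real.sqrt (x ^ 2 + y ^ 2) - 2

/-! The Jacobian is `g·1 + h·(x,y)(x,y)ᵀ + Ω·rot(π/2)`, whose determinant is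
`g² + Ω² + (x² + y²)·g·h`. At an equilibrium, `(g x − Ω y, g y + Ω x) = (−I, 0)`, and taking
squared norms gives `(g² + Ω²)·ζ² = I²`; in particular `ζ ≠ 0` since `I ≠ 0`. Substituting
`g = −1 + αζ − ζ²` and `h = α/ζ − 2` yields the formula. -/

theorem det_smul_one_add_rankOne_add_rotation {R : Type*} [CommRing R] (g h Ω x y : R) :
    (g + x ^ 2 * h) * (g + y ^ 2 * h) - (x * y * h - Ω) * (x * y * h + Ω) =
      g ^ 2 + Ω ^ 2 + (x ^ 2 + y ^ 2) * g * h := by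
  ring

section Equilibrium

variable {α Ω I x y : ℝ}

theorem FRIC_eq_zero_iff :
    FRIC α Ω I x y = (0, 0) ↔ gRIC α x y * x - Ω * y = -I ∧ gRIC α x y * y + Ω * x = 0 := by
  simp only [FRIC, Prod.mk.injEq, add_eq_zero_iff_eq_neg]

theorem sq_add_sq_mul_eq_sq_of_FRIC_eq_zero (heq : FRIC α Ω I x y = (0, 0)) :
    (gRIC α x y ^ 2 + Ω ^ 2) * (x ^ 2 + y ^ 2) = I ^ 2 := by
  obtain ⟨h₁, h₂⟩ := FRIC_eq_zero_iff.mp heq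
  rw [sq_add_sq_mul_sq_add_sq, h₁, h₂]
  ring

theorem sq_add_sq_ne_zero_of_FRIC_eq_zero (hI : I ≠ 0) (heq : FRIC α Ω I x y = (0, 0)) :
    x ^ 2 + y ^ 2 ≠ 0 := by
  intro h
  apply pow_ne_zero 2 hI
  rw [← sq_add_sq_mul_eq_sq_of_FRIC_eq_zero heq, h, mul_zero]

end Equilibrium

theorem sq_add_sq_eq_sq_of_eq_sqrt {x y ζ : ℝ} (hζ : ζ = √(x ^ 2 + y ^ 2)) :
    x ^ 2 + y ^ 2 = ζ ^ 2 := by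
  rw [hζ, Real.sq_sqrt (by positivity)]

theorem gRIC_eq_of_sqrt_eq {α x y ζ : ℝ} (hζ : ζ = √(x ^ 2 + y ^ 2)) :
    gRIC α x y = -1 + α * ζ - ζ ^ 2 := by
  rw [gRIC, ← hζ, sq_add_sq_eq_sq_of_eq_sqrt hζ]

theorem hRIC_eq_of_sqrt_eq {α x y ζ : ℝ} (hζ : ζ = √(x ^ 2 + y ^ 2)) :
    hRIC α x y = α / ζ - 2 := by
  rw [hRIC, ← hζ]

theorem det_of_jacobian_at_equilibrium_general
    (α Ω I : ℝ) (hI : 0 < I) (x y : ℝ)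
    (heq : FRIC α Ω I x y = (0, 0))
    (ζ : ℝ) (hζ : ζ = Real.sqrt (x ^ 2 + y ^ 2)) :
    (gRIC α x y + x ^ 2 * hRIC α x y) * (gRIC α x y + y ^ 2 * hRIC α x y)
      - (x * y * hRIC α x y - Ω) * (x * y * hRIC α x y + Ω) =
      I ^ 2 / ζ ^ 2 + ζ * (-1 + α * ζ - ζ ^ 2) * (α - 2 * ζ) := by
  have hr := sq_add_sq_eq_sq_of_eq_sqrt hζ
  have hζ₀ : ζ ≠ 0 := by
    rintro rfl
    exact sq_add_sq_ne_zero_of_FRIC_eq_zero hI.ne' heq (hr.trans (zero_pow two_ne_zero))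
  have hI₂ := sq_add_sq_mul_eq_sq_of_FRIC_eq_zero heq
  rw [gRIC_eq_of_sqrt_eq hζ, hr] at hI₂
  rw [det_smul_one_add_rankOne_add_rotation, gRIC_eq_of_sqrt_eq hζ, hRIC_eq_of_sqrt_eq hζ, hr,
    ← hI₂]
  field_simp

theorem det_of_jacobian_at_equilibrium
    (α Ω I : ℝ) (hΩ : 0 < Ω) (hI : 0 < I) (x y : ℝ)
    (heq : FRIC α Ω I x y = (0, 0))
    (ζ : ℝ) (hζ : ζ = Real.sqrt (x ^ 2 + y ^ 2)) :
    (gRIC α x y + x ^ 2 * hRIC α x y) * (gRIC α x y + y ^ 2 * hRIC α x y)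
      - (x * y * hRIC α x y - Ω) * (x * y * hRIC α x y + Ω) =
      I ^ 2 / ζ ^ 2 + ζ * (-1 + α * ζ - ζ ^ 2) * (α - 2 * ζ) :=
  det_of_jacobian_at_equilibrium_general α Ω I hI x y heq ζ hζ
end

section
/- Let α ≥ 4·√2/3 be real and set ζ₂ = (3α + √(9α² − 32))/8. Then (1/16)·(−16 + 3·α/ζ₂) < 0. -/
/-! Since `√(9α² − 32) ≥ 0`, the root satisfies `ζ₂ ≥ 3α/8 > 0`, hence `3α/ζ₂ ≤ 8 < 16` and the
coefficient is at most `−1/2`. -/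

lemma div_div_add_le {K : Type*} [Field K] [LinearOrder K] [IsStrictOrderedRing K] {a s c : K}
    (ha : 0 < a) (hs : 0 ≤ s) (hc : 0 < c) : a / ((a + s) / c) ≤ c := by
  rw [div_div_eq_mul_div, div_le_iff₀ (by positivity)]
  nlinarith

theorem supercritical_hopf_at_zeta_two
    (α : ℝ) (hα : α ≥ 4 * Real.sqrt 2 / 3) :
    (1 / 16 : ℝ) * (-16 + 3 * α / ((3 * α + Real.sqrt (9 * α ^ 2 - 32)) / 8)) < 0 := by
  have hα₀ : 0 < α := lt_of_lt_of_le (by positivity) hα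
  have h := div_div_add_le (by positivity : 0 < 3 * α) (Real.sqrt_nonneg (9 * α ^ 2 - 32))
    (by norm_num : (0 : ℝ) < 8)
  linarith
end

section
/- Let α ≥ 4·√2/3 be real and set ζ₁ = (3α − √(9α² − 32))/8 (which is positive). Then (1/16)·(−16 + 3·α/ζ₁) > 0 if and only if 27·α² > 128. -/
/-! Since `√(9α² − 32) < 3α`, the root `ζ₁` is positive, so `a > 0` amounts to `16 ζ₁ < 3α`,
that is `3α < 2√(9α² − 32)`. Both sides being nonnegative, squaring turns this into
`9α² < 4(9α² − 32)`, i.e. `27α² > 128`. -/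

open Real

noncomputable def zetaOne (α : ℝ) : ℝ := (3 * α - √(9 * α ^ 2 - 32)) / 8

noncomputable def firstLyapunovCoeff (α ζ : ℝ) : ℝ := (1 / 16) * (-16 + 3 * α / ζ)

lemma sqrt_nine_mul_sq_sub_lt {α : ℝ} (hα : 0 < α) : √(9 * α ^ 2 - 32) < 3 * α := by
  rw [sqrt_lt' (by positivity)]
  linarith

lemma zetaOne_pos {α : ℝ} (hα : 0 < α) : 0 < zetaOne α := by
  unfold zetaOne
  linarith [sqrt_nine_mul_sq_sub_lt hα]

lemma firstLyapunovCoeff_pos_iff {α ζ : ℝ} (hζ : 0 < ζ) :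
    0 < firstLyapunovCoeff α ζ ↔ 16 * ζ < 3 * α := by
  unfold firstLyapunovCoeff
  rw [← lt_div_iff₀ hζ]
  constructor <;> intro h <;> linarith

lemma sixteen_mul_zetaOne_lt_iff {α : ℝ} (hα : 0 ≤ α) :
    16 * zetaOne α < 3 * α ↔ 128 < 27 * α ^ 2 :=
  calc 16 * zetaOne α < 3 * α ↔ 3 * α / 2 < √(9 * α ^ 2 - 32) := by
        unfold zetaOne
        constructor <;> intro h <;> linarith
    _ ↔ (3 * α / 2) ^ 2 < 9 * α ^ 2 - 32 := lt_sqrt (by positivity)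
    _ ↔ 128 < 27 * α ^ 2 := by
        constructor <;> intro h <;> linarith

theorem subcritical_hopf_at_zeta_one
    (α : ℝ) (hα : α ≥ 4 * Real.sqrt 2 / 3) :
    0 < (3 * α - Real.sqrt (9 * α ^ 2 - 32)) / 8 ∧
    ((1 / 16 : ℝ) * (-16 + 3 * α / ((3 * α - Real.sqrt (9 * α ^ 2 - 32)) / 8)) > 0 ↔
      27 * α ^ 2 > 128) := by
  have hα_pos : 0 < α := lt_of_lt_of_le (by positivity) hα
  exact ⟨zetaOne_pos hα_pos,
    (firstLyapunovCoeff_pos_iff (zetaOne_pos hα_pos)).trans (sixteen_mul_zetaOne_lt_iff hα_pos.le)⟩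
end
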